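/- (Strong Markov Lemma.) Let p(x,y,z) be a pmf on a finite alphabet 𝒳 × 𝒴 × 𝒵 that factors as p(x,y,z) = p(y)p(x|y)p(z|y) (Markov chain X−Y−Z), let ε > 0, and let x^n, y^n be arbitrary sequences with (x^n,y^n) ∈ T_ε^{(n)} with respect to p(x,y). Suppose Z^n is a random sequence supported on the set of z^n with (y^n,z^n) ∈ T_ε^{(n)} with respect to p(y,z), and that the distribution of Z^n is permutation-invariant with respect to y^n, i.e., P_{y^n,z^n} = P_{y^n,z̃^n} implies Pr(Z^n = z^n) = Pr(Z^n = z̃^n). Then there exist constants α > 0 and β, depending only on ε and the alphabet sizes |𝒳|, |𝒴|, |𝒵|, such that Pr((x^n, y^n, Z^n) ∈ T_{4ε}^{(n)} with respect to p(x,y,z)) ≥ 1 − 2^{−αn + β log n}; in particular this probability tends to 1 exponentially fast as n → ∞. -/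

import Mathlib

open Filter

/-- A probability mass function on a finite alphabet. -/
def IsPMF {α : Type} [Fintype α] (p : α → ℝ) : Prop :=
  (∀ a, 0 ≤ p a) ∧ ∑ a, p a = 1

/-- Total variation distance: half the `L¹` distance. -/
noncomputable def tv {α : Type} [Fintype α] (p q : α → ℝ) : ℝ :=
  (1 / 2) * ∑ a, |p a - q a|

open Classical in
/-- Joint type (empirical distribution) of a sequence. -/
noncomputable def jointType {α : Type} (n : ℕ) (s : Fin n → α) : α → ℝ :=
  fun a => ((Finset.univ.filter fun t => s t = a).card : ℝ) / n

open Classical in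
/-- Pushforward of a mass function along a map. -/
noncomputable def pmfMap {S α : Type} [Fintype S] (p : S → ℝ) (f : S → α) : α → ℝ :=
  fun a => ∑ s, if f s = a then p s else 0

/-- Shannon entropy, base 2, with the convention `0 log 0 = 0`. -/
noncomputable def H2 {α : Type} [Fintype α] (p : α → ℝ) : ℝ :=
  ∑ a, -(p a * Real.logb 2 (p a))

/-- Mutual information `I(f(S); g(S))` for `S ∼ p`. -/
noncomputable def MI {S α β : Type} [Fintype S] [Fintype α] [Fintype β]
    (p : S → ℝ) (f : S → α) (g : S → β) : ℝ :=
  H2 (pmfMap p f) + H2 (pmfMap p g) - H2 (pmfMap p fun s => (f s, g s))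

/-- Conditional mutual information `I(f(S); g(S) | h(S))` for `S ∼ p`. -/
noncomputable def condMI {S α β γ : Type} [Fintype S] [Fintype α] [Fintype β] [Fintype γ]
    (p : S → ℝ) (f : S → α) (g : S → β) (h : S → γ) : ℝ :=
  H2 (pmfMap p fun s => (f s, h s)) + H2 (pmfMap p fun s => (g s, h s))
    - H2 (pmfMap p fun s => (f s, g s, h s)) - H2 (pmfMap p h)

/-- The number of messages `⌈2^{nR}⌉` available at rate `R` and blocklength `n`. -/
noncomputable def msgCount (n : ℕ) (R : ℝ) : ℕ := ⌈(2 : ℝ) ^ ((n : ℝ) * R)⌉₊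

open Classical in
/-- Probability of the event `E` under the (mass) distribution `μ`. -/
noncomputable def probOf {α : Type} [Fintype α] (μ : α → ℝ) (E : α → Prop) : ℝ :=
  ∑ a, if E a then μ a else 0

/-!
Given its joint type with `ys`, the sequence `Z^n` is uniform on a type class `𝒞`, so it suffices
to show that few members of a type class are atypical. For `w ∈ 𝒞`, the `markovJoin` of the pair
types of `(xs, ys)` and `(ys, w)` is `3ε`-close to `p`, since `p` is the `markovJoin` of its own
pair marginals. If `(xs, ys, zs)` is not `4ε`-typical, then some cell count
`#{t | (xs t, ys t, zs t) = (a, b, c)}`, or the same count with `zs t ≠ c`, exceeds its mean over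
`𝒞` by more than `2δ`, where `δ = εn / k` and `k ≥ |𝒳 × 𝒴 × 𝒵|`.
Swapping two positions with equal `y`-values preserves `𝒞`. Double counting these swaps shows that
above `mean + δ` the number of members of `𝒞` with count `j + 1` is at most `n / (n + δ)` times
the number with count `j`. This geometric decay makes the excess exponentially rare.
-/

open Finset

section JointType

variable {α β : Type} {n : ℕ}

theorem jointType_mul_eq_card [DecidableEq α] (s : Fin n → α) (a : α) :
    jointType n s a * n = #{t | s t = a} := by
  rcases eq_or_ne n 0 with rfl | hn
  · simp
  · simp only [jointType, ne_eq, Nat.cast_eq_zero, hn, not_false_eq_true, div_mul_cancel₀]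
    congr

theorem jointType_nonneg (s : Fin n → α) : 0 ≤ jointType n s := fun _ => by
  unfold jointType; positivity

theorem jointType_comp_perm (s : Fin n → α) (σ : Equiv.Perm (Fin n)) :
    jointType n (s ∘ σ) = jointType n s := by
  funext a
  simp only [jointType]
  congr 2
  exact card_equiv σ (by simp)

theorem jointType_comp_swap {ys : Fin n → α} {i j : Fin n} (hij : ys i = ys j) (zs : Fin n → β) :
    jointType n (fun t => (ys t, (zs ∘ Equiv.swap i j) t)) = jointType n fun t => (ys t, zs t) := by
  have hys : ∀ t, ys (Equiv.swap i j t) = ys t := fun t => by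
    rcases eq_or_ne t i with rfl | hi
    · simp [hij]
    rcases eq_or_ne t j with rfl | hj
    · simp [hij]
    · rw [Equiv.swap_apply_of_ne_of_ne hi hj]
  rw [← jointType_comp_perm _ (Equiv.swap i j)]
  congr 1
  funext t
  simp [hys]

theorem card_filter_eq_of_jointType_eq [Fintype α] {s s' : Fin n → α}
    (h : jointType n s = jointType n s') (Q : α → Prop) [DecidablePred Q] :
    #{t | Q (s t)} = #{t | Q (s' t)} := by
  classical
  have hcount (s : Fin n → α) : #{t | Q (s t)} = ∑ a with Q a, #{t | s t = a} :=
    ((sum_card_fiberwise_eq_card_filter _ _ _).trans (by simp)).symm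
  rw [hcount, hcount]
  refine sum_congr rfl fun a _ => ?_
  have := jointType_mul_eq_card s a
  rw [h, jointType_mul_eq_card] at this
  exact_mod_cast this.symm

theorem jointType_one [DecidableEq α] (s : Fin 1 → α) :
    jointType 1 s = fun a => if s 0 = a then 1 else 0 := by
  funext a
  by_cases h : s 0 = a <;> simp [jointType, h, filter_true_of_mem, filter_false_of_mem]

end JointType

section PmfMap

variable {S α β γ : Type} [Fintype S]

theorem pmfMap_pmfMap [Fintype α] (p : S → ℝ) (f : S → α) (g : α → γ) :
    pmfMap (pmfMap p f) g = pmfMap p (g ∘ f) := by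
  classical
  funext c
  simp only [pmfMap, Function.comp_apply, ite_sum_zero]
  rw [sum_comm]
  refine sum_congr rfl fun s _ => ?_
  rw [sum_eq_single (f s)] <;> aesop

theorem pmfMap_fst_apply [Fintype α] [Fintype β] (q : α × β → ℝ) (a : α) :
    pmfMap q Prod.fst a = ∑ b, q (a, b) := by
  simp only [pmfMap, Fintype.sum_prod_type]
  rw [sum_eq_single a] <;> simp +contextual

theorem pmfMap_snd_apply [Fintype α] [Fintype β] (q : α × β → ℝ) (b : β) :
    pmfMap q Prod.snd b = ∑ a, q (a, b) := by
  simp only [pmfMap, Fintype.sum_prod_type]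
  exact sum_congr rfl fun a _ => by rw [sum_eq_single b] <;> simp +contextual

theorem le_pmfMap_apply {p : S → ℝ} (hp : 0 ≤ p) (f : S → α) (s : S) :
    p s ≤ pmfMap p f (f s) := by
  classical
  simp only [pmfMap, ← sum_filter]
  exact single_le_sum (fun s' _ => hp s') (by simp)

theorem pmfMap_nonneg {p : S → ℝ} (hp : 0 ≤ p) (f : S → α) : 0 ≤ pmfMap p f := fun a =>
  sum_nonneg fun s _ => by split_ifs; exacts [hp s, le_rfl]

end PmfMap

section TotalVariation

variable {α : Type} [Fintype α]

theorem tv_triangle (f g h : α → ℝ) : tv f h ≤ tv f g + tv g h := by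
  simp only [tv, ← mul_add, ← sum_add_distrib]
  gcongr with a
  exact abs_sub_le _ _ _

theorem exists_lt_abs_sub_of_lt_tv {f g : α → ℝ} {ε k : ℝ} (hε : 0 ≤ ε)
    (hk : (Fintype.card α : ℝ) ≤ k) (hk₀ : 0 < k) (h : ε < tv f g) :
    ∃ a, 2 * ε / k < |f a - g a| := by
  have hsum : ∑ _a : α, 2 * ε / k < ∑ a, |f a - g a| :=
    calc ∑ _a : α, 2 * ε / k = Fintype.card α * (2 * ε / k) := by simp
      _ ≤ k * (2 * ε / k) := by gcongr
      _ = 2 * ε := by field_simp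
      _ < ∑ a, |f a - g a| := by rw [tv] at h; linarith
  obtain ⟨a, -, ha⟩ := exists_lt_of_sum_lt hsum
  exact ⟨a, ha⟩

end TotalVariation

section MarkovJoin

variable {𝒳 𝒴 𝒵 : Type} [Fintype 𝒵]

/-- The law `q₁ q₂ / q_Y` of a Markov chain `X − Y − Z` with pair laws `q₁`, `q₂`; by `x / 0 = 0`
it vanishes where the `Y`-marginal of `q₂` does. -/
noncomputable def markovJoin (q₁ : 𝒳 × 𝒴 → ℝ) (q₂ : 𝒴 × 𝒵 → ℝ) : 𝒳 × 𝒴 × 𝒵 → ℝ :=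
  fun x => q₁ (x.1, x.2.1) * q₂ x.2 / ∑ c, q₂ (x.2.1, c)

theorem sum_mul_div_sum_of_nonneg {v : 𝒵 → ℝ} (hv : 0 ≤ v) (c : 𝒵) :
    (∑ c', v c') * (v c / ∑ c', v c') = v c := by
  rcases eq_or_ne (∑ c', v c') 0 with h | h
  · rw [(sum_eq_zero_iff_of_nonneg fun c _ => hv c).1 h c (mem_univ c), h]; simp
  · field_simp

theorem sum_abs_rescale_sub_le {u : 𝒵 → ℝ} (hu : 0 ≤ u) (v : 𝒵 → ℝ) :
    ∑ c, |(∑ c', v c') * (u c / ∑ c', u c') - v c| ≤ 2 * ∑ c, |u c - v c| := by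
  set U := ∑ c', u c'
  set V := ∑ c', v c'
  have hVU : |V - U| ≤ ∑ c, |u c - v c| := by
    rw [← sum_sub_distrib]
    exact (abs_sum_le_sum_abs _ _).trans_eq (sum_congr rfl fun c _ => abs_sub_comm _ _)
  rcases eq_or_lt_of_le (show 0 ≤ U from sum_nonneg fun c _ => hu c) with hU | hU
  · have hu0 : ∀ c, u c = 0 := fun c => (sum_eq_zero_iff_of_nonneg fun c _ => hu c).1 hU.symm c
      (mem_univ c)
    simp only [hu0, zero_div, mul_zero, zero_sub, abs_neg]
    linarith [sum_nonneg fun c (_ : c ∈ univ) => abs_nonneg (v c)]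
  calc ∑ c, |V * (u c / U) - v c| = ∑ c, |(V - U) * (u c / U) + (u c - v c)| := by
        refine sum_congr rfl fun c _ => ?_
        rw [sub_mul, mul_div_cancel₀ _ hU.ne']
        ring_nf
    _ ≤ ∑ c, (|V - U| * (u c / U) + |u c - v c|) := by
        gcongr with c
        refine (abs_add_le _ _).trans_eq ?_
        rw [abs_mul, abs_of_nonneg (div_nonneg (hu c) hU.le)]
    _ = |V - U| + ∑ c, |u c - v c| := by
        rw [sum_add_distrib, ← mul_sum, ← sum_div, div_self hU.ne', mul_one]
    _ ≤ 2 * ∑ c, |u c - v c| := by linarith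

theorem sum_sum_abs_markovJoin_sub_le [Fintype 𝒳] {q₁ p₁ : 𝒳 × 𝒴 → ℝ} {q₂ p₂ : 𝒴 × 𝒵 → ℝ}
    (hq₂ : 0 ≤ q₂) (hp₁ : 0 ≤ p₁) (hp₂ : 0 ≤ p₂) {b : 𝒴}
    (hb : ∑ a, p₁ (a, b) = ∑ c, p₂ (b, c)) :
    ∑ a, ∑ c, |markovJoin q₁ q₂ (a, b, c) - markovJoin p₁ p₂ (a, b, c)|
      ≤ ∑ a, |q₁ (a, b) - p₁ (a, b)| + 2 * ∑ c, |q₂ (b, c) - p₂ (b, c)| := by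
  set U := ∑ c, q₂ (b, c)
  set V := ∑ c, p₂ (b, c)
  have hq₂U : ∑ c, q₂ (b, c) / U ≤ 1 := by rw [← sum_div]; exact div_self_le_one U
  have hV (c : 𝒵) : V * |q₂ (b, c) / U - p₂ (b, c) / V| = |V * (q₂ (b, c) / U) - p₂ (b, c)| := by
    have hVc : V * (p₂ (b, c) / V) = p₂ (b, c) :=
      sum_mul_div_sum_of_nonneg (v := fun c => p₂ (b, c)) (fun c => hp₂ _) c
    have hV₀ : 0 ≤ V := sum_nonneg fun c _ => hp₂ _
    conv_rhs => rw [← hVc, ← mul_sub, abs_mul, abs_of_nonneg hV₀]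
  calc ∑ a, ∑ c, |markovJoin q₁ q₂ (a, b, c) - markovJoin p₁ p₂ (a, b, c)|
      ≤ ∑ a, ∑ c, (|q₁ (a, b) - p₁ (a, b)| * (q₂ (b, c) / U)
          + p₁ (a, b) * |q₂ (b, c) / U - p₂ (b, c) / V|) := by
        gcongr with a _ c
        have hsplit : markovJoin q₁ q₂ (a, b, c) - markovJoin p₁ p₂ (a, b, c)
            = (q₁ (a, b) - p₁ (a, b)) * (q₂ (b, c) / U)
              + p₁ (a, b) * (q₂ (b, c) / U - p₂ (b, c) / V) := by
          simp only [markovJoin]; ring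
        rw [hsplit]
        refine (abs_add_le _ _).trans_eq ?_
        rw [abs_mul, abs_mul, abs_of_nonneg (div_nonneg (hq₂ _) (sum_nonneg fun c _ => hq₂ _)),
          abs_of_nonneg (hp₁ _)]
    _ = (∑ a, |q₁ (a, b) - p₁ (a, b)|) * ∑ c, q₂ (b, c) / U
          + ∑ c, |V * (q₂ (b, c) / U) - p₂ (b, c)| := by
        simp only [sum_add_distrib, ← mul_sum, ← sum_mul, hb]
        exact congrArg _ ((mul_sum _ _ _).trans (sum_congr rfl fun c _ => hV c))
    _ ≤ ∑ a, |q₁ (a, b) - p₁ (a, b)| + 2 * ∑ c, |q₂ (b, c) - p₂ (b, c)| := by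
        gcongr ?_ + ?_
        · exact mul_le_of_le_one_right (sum_nonneg fun a _ => abs_nonneg _) hq₂U
        · exact sum_abs_rescale_sub_le (u := fun c => q₂ (b, c)) (fun c => hq₂ _) _

theorem tv_markovJoin_le [Fintype 𝒳] [Fintype 𝒴] {q₁ p₁ : 𝒳 × 𝒴 → ℝ} {q₂ p₂ : 𝒴 × 𝒵 → ℝ}
    (hq₂ : 0 ≤ q₂) (hp₁ : 0 ≤ p₁) (hp₂ : 0 ≤ p₂) (hp : ∀ b, ∑ a, p₁ (a, b) = ∑ c, p₂ (b, c)) :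
    tv (markovJoin q₁ q₂) (markovJoin p₁ p₂) ≤ tv q₁ p₁ + 2 * tv q₂ p₂ := by
  have htotal := sum_le_sum fun b (_ : b ∈ univ) =>
    sum_sum_abs_markovJoin_sub_le (q₁ := q₁) hq₂ hp₁ hp₂ (hp b)
  rw [sum_add_distrib, ← mul_sum, sum_comm, sum_comm (s := univ) (t := univ)
    (f := fun b a => |q₁ (a, b) - p₁ (a, b)|)] at htotal
  simp only [tv, Fintype.sum_prod_type]
  linarith

theorem markovJoin_jointType_one (xs : Fin 1 → 𝒳) (ys : Fin 1 → 𝒴) (zs : Fin 1 → 𝒵) :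
    markovJoin (jointType 1 fun t => (xs t, ys t)) (jointType 1 fun t => (ys t, zs t))
      = jointType 1 fun t => (xs t, ys t, zs t) := by
  classical
  funext ⟨a, b, c⟩
  simp only [markovJoin, jointType_one, Prod.mk.injEq]
  by_cases hb : ys 0 = b <;> by_cases ha : xs 0 = a <;> by_cases hc : zs 0 = c <;>
    simp [ha, hb, hc]

end MarkovJoin

section MarkovChain

variable {𝒳 𝒴 𝒵 : Type} [Fintype 𝒳] [Fintype 𝒴] [Fintype 𝒵] {p : 𝒳 × 𝒴 × 𝒵 → ℝ}

theorem sum_pmfMap_yz_eq (p : 𝒳 × 𝒴 × 𝒵 → ℝ) (b : 𝒴) :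
    ∑ c, pmfMap p (fun x => (x.2.1, x.2.2)) (b, c) = pmfMap p (fun x => x.2.1) b := by
  rw [← pmfMap_fst_apply, pmfMap_pmfMap]
  rfl

theorem sum_pmfMap_xy_eq (p : 𝒳 × 𝒴 × 𝒵 → ℝ) (b : 𝒴) :
    ∑ a, pmfMap p (fun x => (x.1, x.2.1)) (a, b) = pmfMap p (fun x => x.2.1) b := by
  rw [← pmfMap_snd_apply, pmfMap_pmfMap]
  rfl

theorem markovJoin_eq_of_markov (hp : 0 ≤ p)
    (hmk : ∀ x y z, p (x, y, z) * pmfMap p (fun a => a.2.1) y =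
      pmfMap p (fun a => (a.1, a.2.1)) (x, y) * pmfMap p (fun a => (a.2.1, a.2.2)) (y, z)) :
    markovJoin (pmfMap p fun a => (a.1, a.2.1)) (pmfMap p fun a => (a.2.1, a.2.2)) = p := by
  funext ⟨a, b, c⟩
  simp only [markovJoin, sum_pmfMap_yz_eq]
  rcases eq_or_ne (pmfMap p (fun x => x.2.1) b) 0 with hb | hb
  · have hle := le_pmfMap_apply hp (fun x => x.2.1) (a, b, c)
    rw [hb] at hle
    rw [hb, div_zero, le_antisymm hle (hp _)]
  · rw [div_eq_iff hb, hmk]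

theorem tv_markovJoin_jointType_lt (hp : IsPMF p)
    (hmk : ∀ x y z, p (x, y, z) * pmfMap p (fun a => a.2.1) y =
      pmfMap p (fun a => (a.1, a.2.1)) (x, y) * pmfMap p (fun a => (a.2.1, a.2.2)) (y, z))
    {n : ℕ} {xs : Fin n → 𝒳} {ys : Fin n → 𝒴} {zs : Fin n → 𝒵} {ε : ℝ}
    (hxy : tv (jointType n fun t => (xs t, ys t)) (pmfMap p fun a => (a.1, a.2.1)) < ε)
    (hyz : tv (jointType n fun t => (ys t, zs t)) (pmfMap p fun a => (a.2.1, a.2.2)) < ε) :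
    tv (markovJoin (jointType n fun t => (xs t, ys t)) (jointType n fun t => (ys t, zs t))) p
      < 3 * ε := by
  have hjoin := tv_markovJoin_le (q₁ := jointType n fun t => (xs t, ys t))
    (jointType_nonneg fun t => (ys t, zs t)) (pmfMap_nonneg hp.1 _) (pmfMap_nonneg hp.1 _)
    (fun b => (sum_pmfMap_xy_eq p b).trans (sum_pmfMap_yz_eq p b).symm)
  rw [markovJoin_eq_of_markov hp.1 hmk] at hjoin
  linarith

end MarkovChain

section Cells

variable {α β γ : Type} {n : ℕ}

open Classical in
theorem jointType_triple_apply (xs : Fin n → α) (ys : Fin n → β) (zs : Fin n → γ) (a : α) (b : β)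
    (c : γ) :
    jointType n (fun t => (xs t, ys t, zs t)) (a, b, c)
      = #{t ∈ {t | (xs t, ys t) = (a, b)} | zs t = c} / n := by
  rw [jointType, filter_filter]
  congr 3
  ext t
  simp [and_assoc]

open Classical in
theorem markovJoin_jointType_apply [Fintype γ] (xs : Fin n → α) (ys : Fin n → β) (w : Fin n → γ)
    (a : α) (b : β) (c : γ) :
    markovJoin (jointType n fun t => (xs t, ys t)) (jointType n fun t => (ys t, w t)) (a, b, c)
      = #{t | (xs t, ys t) = (a, b)} / n * (#{t ∈ {t | ys t = b} | w t = c} / n)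
        / (#{t | ys t = b} / n) := by
  have hpair (c' : γ) : #{t | (ys t, w t) = (b, c')} = #{t ∈ {t | ys t = b} | w t = c'} := by
    rw [filter_filter]; simp
  have hY : ∑ c', (#{t ∈ {t | ys t = b} | w t = c'} : ℝ) = #{t | ys t = b} := by
    exact_mod_cast (sum_card_fiberwise_eq_card_filter _ _ _).trans (by simp)
  simp only [markovJoin, jointType, ← sum_div, hpair, hY]

end Cells

open Classical in
theorem cast_card_filter_not {ι : Type} (s : Finset ι) (q : ι → Prop) :
    (#{t ∈ s | ¬ q t} : ℝ) = #s - #{t ∈ s | q t} := by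
  rw [← card_filter_add_card_filter_not (s := s) (p := q)]; push_cast; ring

theorem lt_or_lt_sub_of_lt_abs_sub_div {N d m κ n δ : ℝ} (hn : 0 < n) (hN : 0 ≤ N) (hδ : 0 ≤ δ)
    (h : 2 * δ / n < |N / n - d / n * (m / n) / (κ / n)|) :
    d * m / κ + 2 * δ < N ∨ d * (κ - m) / κ + 2 * δ < d - N := by
  have hscale : N / n - d / n * (m / n) / (κ / n) = (N - d * m / κ) / n := by
    rcases eq_or_ne κ 0 with rfl | hκ
    · simp
    · field_simp
  rw [hscale, abs_div, abs_of_pos hn, div_lt_div_iff_of_pos_right hn] at h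
  rcases lt_abs.1 h with h | h
  · left; linarith
  · right
    rcases eq_or_ne κ 0 with rfl | hκ
    · simp at h; linarith
    · rw [mul_sub, sub_div, mul_div_assoc, div_self hκ]; linarith

theorem hypergeometric_ratio_le {c₀ c₁ κ d m k δ : ℝ} (hc₁ : 0 ≤ c₁) (hδ : 0 ≤ δ) (hk₀ : 0 ≤ k)
    (hkd : k + 1 ≤ d) (hkm : k + 1 ≤ m) (hdmκ : m - (k + 1) ≤ κ - d)
    (hk : d * m + κ * δ ≤ k * κ)
    (h : c₁ * ((k + 1) * (κ - d - (m - (k + 1)))) ≤ c₀ * ((d - k) * (m - k))) :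
    c₁ * (κ + δ) ≤ c₀ * κ := by
  have hP : 0 < (d - k) * (m - k) := mul_pos (by linarith) (by linarith)
  have hPκ : (d - k) * (m - k) ≤ κ ^ 2 := by nlinarith
  have hlow : (d - k) * (m - k) + κ * δ ≤ (k + 1) * (κ - d - (m - (k + 1))) := by nlinarith
  refine le_of_mul_le_mul_right ?_ hP
  nlinarith [mul_le_mul_of_nonneg_left hlow hc₁, mul_nonneg (mul_nonneg hc₁ hδ) (sub_nonneg.2 hPκ)]

section SwapChain

variable {ι β : Type} [DecidableEq ι] {A B : Finset ι} {P : β → Prop} [DecidablePred P]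

theorem card_filter_comp_swap_add_one {f : ι → β} {i j : ι} (hi : i ∈ A) (hj : j ∉ A)
    (hPi : P (f i)) (hPj : ¬ P (f j)) :
    #{t ∈ A | P ((f ∘ Equiv.swap i j) t)} + 1 = #{t ∈ A | P (f t)} := by
  have hA : {t ∈ A | P ((f ∘ Equiv.swap i j) t)} = {t ∈ A | P (f t)}.erase i := by
    ext t
    simp only [mem_filter, mem_erase, Function.comp_apply]
    by_cases hti : t = i
    · simp [hti, hPj]
    · have htj : t ∈ A → t ≠ j := fun ht h => hj (h ▸ ht)
      constructor
      · rintro ⟨ht, hP⟩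
        exact ⟨hti, ht, by rwa [Equiv.swap_apply_of_ne_of_ne hti (htj ht)] at hP⟩
      · rintro ⟨-, ht, hP⟩
        exact ⟨ht, by rwa [Equiv.swap_apply_of_ne_of_ne hti (htj ht)]⟩
  rw [hA, card_erase_add_one (mem_filter.2 ⟨hi, hPi⟩)]

theorem card_filter_sdiff_eq (hAB : A ⊆ B) (f : ι → β) :
    #{t ∈ B \ A | P (f t)} = #{t ∈ B | P (f t)} - #{t ∈ A | P (f t)} := by
  rw [← card_sdiff_of_subset (filter_subset_filter _ hAB)]
  congr 1
  ext t
  simp only [mem_filter, Finset.mem_sdiff]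
  tauto

/-- Double counting: `(f, i, j) ↦ (f ∘ swap i j, i, j)` turns a `P`-value at `i ∈ A` and a
non-`P`-value at `j ∈ B \ A` into the reverse configuration, lowering the count in `A` by one. -/
theorem card_level_succ_mul_le {𝒞 : Finset (ι → β)} (hAB : A ⊆ B) {m : ℕ}
    (hswap : ∀ f ∈ 𝒞, ∀ i ∈ B, ∀ j ∈ B, f ∘ Equiv.swap i j ∈ 𝒞)
    (hm : ∀ f ∈ 𝒞, #{t ∈ B | P (f t)} = m) (k : ℕ) :
    #{f ∈ 𝒞 | #{t ∈ A | P (f t)} = k + 1} * ((k + 1) * (#(B \ A) - (m - (k + 1))))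
      ≤ #{f ∈ 𝒞 | #{t ∈ A | P (f t)} = k} * ((#A - k) * (m - k)) := by
  have hcompl (s : Finset ι) (f : ι → β) : #{t ∈ s | ¬ P (f t)} = #s - #{t ∈ s | P (f t)} := by
    rw [← card_filter_add_card_filter_not (s := s) (p := fun t => P (f t))]; omega
  let up := {f ∈ 𝒞 | #{t ∈ A | P (f t)} = k + 1}.sigma
    fun f => {t ∈ A | P (f t)} ×ˢ {t ∈ B \ A | ¬ P (f t)}
  let down := {f ∈ 𝒞 | #{t ∈ A | P (f t)} = k}.sigma
    fun f => {t ∈ A | ¬ P (f t)} ×ˢ {t ∈ B \ A | P (f t)}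
  have hup : #up
      = #{f ∈ 𝒞 | #{t ∈ A | P (f t)} = k + 1} * ((k + 1) * (#(B \ A) - (m - (k + 1)))) := by
    rw [card_sigma]
    refine sum_const_nat fun f hf => ?_
    obtain ⟨hf, hk⟩ := mem_filter.1 hf
    rw [card_product, hk, hcompl, card_filter_sdiff_eq hAB, hm f hf, hk]
  have hdown : #down = #{f ∈ 𝒞 | #{t ∈ A | P (f t)} = k} * ((#A - k) * (m - k)) := by
    rw [card_sigma]
    refine sum_const_nat fun f hf => ?_
    obtain ⟨hf, hk⟩ := mem_filter.1 hf
    rw [card_product, hcompl, hk, card_filter_sdiff_eq hAB, hm f hf, hk]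
  rw [← hup, ← hdown]
  refine card_le_card_of_injOn (fun x => ⟨x.1 ∘ Equiv.swap x.2.1 x.2.2, x.2⟩) ?_ ?_
  · rintro ⟨f, i, j⟩ hx
    simp only [up, coe_sigma, Set.mem_sigma_iff, coe_filter, Set.mem_ofPred_eq, coe_product,
      Set.mem_prod, Finset.mem_sdiff] at hx
    obtain ⟨⟨hf, hk⟩, ⟨hi, hPi⟩, ⟨hjB, hjA⟩, hPj⟩ := hx
    have hcnt := card_filter_comp_swap_add_one hi hjA hPi hPj
    simp only [Function.comp_apply] at hcnt
    simp only [down, coe_sigma, Set.mem_sigma_iff, coe_filter, Set.mem_ofPred_eq, coe_product,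
      Set.mem_prod, Finset.mem_sdiff, Function.comp_apply, Equiv.swap_apply_left,
      Equiv.swap_apply_right]
    exact ⟨⟨hswap f hf i (hAB hi) j hjB, by omega⟩, ⟨hi, hPj⟩, ⟨hjB, hjA⟩, hPi⟩
  · rintro ⟨f, i, j⟩ - ⟨f', i', j'⟩ - h
    simp only [Sigma.mk.injEq, Prod.mk.injEq, heq_eq_eq] at h
    obtain ⟨hf, rfl, rfl⟩ := h
    obtain rfl : f = f' := funext fun t => by simpa using congrFun hf (Equiv.swap i j t)
    rfl

theorem card_level_succ_le {𝒞 : Finset (ι → β)} (hAB : A ⊆ B) {m : ℕ}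
    (hswap : ∀ f ∈ 𝒞, ∀ i ∈ B, ∀ j ∈ B, f ∘ Equiv.swap i j ∈ 𝒞)
    (hm : ∀ f ∈ 𝒞, #{t ∈ B | P (f t)} = m) {k : ℕ} {δ : ℝ} (hδ : 0 ≤ δ)
    (hk : (#A : ℝ) * m / #B + δ ≤ k) :
    (#{f ∈ 𝒞 | #{t ∈ A | P (f t)} = k + 1} : ℝ) * (#B + δ)
      ≤ #{f ∈ 𝒞 | #{t ∈ A | P (f t)} = k} * #B := by
  rcases Nat.eq_zero_or_pos #{f ∈ 𝒞 | #{t ∈ A | P (f t)} = k + 1} with h₁ | h₁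
  · rw [h₁, Nat.cast_zero, zero_mul]; positivity
  obtain ⟨f, hf⟩ := card_pos.1 h₁
  obtain ⟨hf, hfk⟩ := mem_filter.1 hf
  have hkA : k + 1 ≤ #A := hfk ▸ card_filter_le _ _
  have hkm : k + 1 ≤ m := hfk ▸ hm f hf ▸ card_le_card (filter_subset_filter _ hAB)
  have hBA := card_le_card hAB
  have hsd : m - (k + 1) ≤ #B - #A := by
    have := card_filter_le (B \ A) fun t => P (f t)
    rwa [card_filter_sdiff_eq hAB, hm f hf, hfk, card_sdiff_of_subset hAB] at this
  have hsd' := (Nat.cast_le (α := ℝ)).2 hsd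
  have hchain := (Nat.cast_le (α := ℝ)).2 (card_level_succ_mul_le (P := P) hAB hswap hm k)
  rw [card_sdiff_of_subset hAB] at hchain
  push_cast [Nat.cast_sub hsd, Nat.cast_sub hkm, Nat.cast_sub hBA,
    Nat.cast_sub (by omega : k ≤ #A), Nat.cast_sub (by omega : k ≤ m)] at hchain hsd'
  have hκ : (0 : ℝ) < #B := by exact_mod_cast (by omega : 0 < #B)
  refine hypergeometric_ratio_le (Nat.cast_nonneg _) hδ (Nat.cast_nonneg k) (by exact_mod_cast hkA)
    (by exact_mod_cast hkm) hsd' ?_ hchain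
  rw [div_add' _ _ _ hκ.ne', div_le_iff₀ hκ] at hk
  linarith

theorem card_level_le_pow_mul {𝒞 : Finset (ι → β)} (hAB : A ⊆ B) {m : ℕ}
    (hswap : ∀ f ∈ 𝒞, ∀ i ∈ B, ∀ j ∈ B, f ∘ Equiv.swap i j ∈ 𝒞)
    (hm : ∀ f ∈ 𝒞, #{t ∈ B | P (f t)} = m) {δ : ℝ} (hδ : 0 < δ) {k : ℕ}
    (hk : (#A : ℝ) * m / #B + 2 * δ < k) :
    (#{f ∈ 𝒞 | #{t ∈ A | P (f t)} = k} : ℝ) ≤ ((#B : ℝ) / (#B + δ)) ^ ⌊δ⌋₊ * #𝒞 := by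
  set r := ⌊δ⌋₊
  have hr : (r : ℝ) ≤ δ := Nat.floor_le hδ.le
  have hmean : (0 : ℝ) ≤ #A * m / #B := by positivity
  have hrk : r ≤ k := by exact_mod_cast (show (r : ℝ) ≤ k by linarith)
  set u : ℕ → ℝ := fun j => #{f ∈ 𝒞 | #{t ∈ A | P (f t)} = k - r + j}
  have hdecay : ∀ j < r, u (j + 1) ≤ #B / (#B + δ) * u j := by
    intro j _
    have hj : (#A : ℝ) * m / #B + δ ≤ ↑(k - r + j) := by
      push_cast [Nat.cast_sub hrk]; linarith [(Nat.cast_nonneg j : (0 : ℝ) ≤ j)]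
    simp only [u, ← add_assoc]
    rw [div_mul_eq_mul_div, le_div_iff₀ (by positivity), mul_comm (#B : ℝ)]
    exact card_level_succ_le hAB hswap hm hδ.le hj
  have hgeom := le_geom (by positivity) r hdecay
  simp only [u, Nat.sub_add_cancel hrk, add_zero] at hgeom
  refine hgeom.trans (mul_le_mul_of_nonneg_left ?_ (by positivity))
  exact_mod_cast card_le_card (filter_subset _ _)

theorem card_upper_tail_le [Fintype ι] {𝒞 : Finset (ι → β)} (hAB : A ⊆ B) {m : ℕ}
    (hswap : ∀ f ∈ 𝒞, ∀ i ∈ B, ∀ j ∈ B, f ∘ Equiv.swap i j ∈ 𝒞)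
    (hm : ∀ f ∈ 𝒞, #{t ∈ B | P (f t)} = m) {δ : ℝ} (hδ : 0 < δ) :
    (#{f ∈ 𝒞 | (#A : ℝ) * m / #B + 2 * δ < #{t ∈ A | P (f t)}} : ℝ)
      ≤ (Fintype.card ι + 1) * ((Fintype.card ι : ℝ) / (Fintype.card ι + δ)) ^ ⌊δ⌋₊ * #𝒞 := by
  set N := Fintype.card ι
  set θ : ℝ := #A * m / #B + 2 * δ
  have hratio : (#B : ℝ) / (#B + δ) ≤ N / (N + δ) := by
    have hBN : (#B : ℝ) ≤ N := by exact_mod_cast card_le_univ B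
    rw [div_le_div_iff₀ (by positivity) (by positivity)]
    nlinarith
  have hmaps : ∀ f ∈ {f ∈ 𝒞 | θ < #{t ∈ A | P (f t)}},
      #{t ∈ A | P (f t)} ∈ {k ∈ range (N + 1) | θ < ((k : ℕ) : ℝ)} := by
    intro f hf
    simp only [mem_filter, mem_range] at hf ⊢
    exact ⟨Nat.lt_succ_of_le ((card_filter_le _ _).trans (card_le_univ A)), hf.2⟩
  calc (#{f ∈ 𝒞 | θ < #{t ∈ A | P (f t)}} : ℝ)
      = ∑ k ∈ range (N + 1) with θ < ((k : ℕ) : ℝ),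
          (#{f ∈ {f ∈ 𝒞 | θ < #{t ∈ A | P (f t)}} | #{t ∈ A | P (f t)} = k} : ℝ) := by
        exact_mod_cast card_eq_sum_card_fiberwise hmaps
    _ ≤ ∑ k ∈ range (N + 1) with θ < ((k : ℕ) : ℝ), ((N : ℝ) / (N + δ)) ^ ⌊δ⌋₊ * #𝒞 := by
        refine sum_le_sum fun k hk => ?_
        have hlevel := card_level_le_pow_mul hAB hswap hm hδ (mem_filter.1 hk).2
        refine le_trans ?_ (hlevel.trans (by gcongr))
        exact_mod_cast card_le_card fun f hf => by
          simp only [mem_filter] at hf ⊢; exact ⟨hf.1.1, hf.2⟩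
    _ ≤ (N + 1) * ((N : ℝ) / (N + δ)) ^ ⌊δ⌋₊ * #𝒞 := by
        rw [sum_const, nsmul_eq_mul, mul_assoc]
        gcongr
        exact_mod_cast (card_filter_le _ _).trans (card_range _).le

end SwapChain

section Probability

variable {α : Type} [Fintype α] {μ : α → ℝ}

theorem probOf_nonneg (hμ : IsPMF μ) (E : α → Prop) : 0 ≤ probOf μ E :=
  sum_nonneg fun a _ => by split_ifs; exacts [hμ.1 a, le_rfl]

theorem probOf_not (hμ : IsPMF μ) (E : α → Prop) :
    probOf μ (fun a => ¬ E a) = 1 - probOf μ E := by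
  rw [← hμ.2, probOf, probOf, eq_sub_iff_add_eq, ← sum_add_distrib]
  exact sum_congr rfl fun a _ => by by_cases h : E a <;> simp [h]

theorem probOf_eq_zero {E : α → Prop} (h : ∀ a, μ a ≠ 0 → ¬ E a) : probOf μ E = 0 :=
  sum_eq_zero fun a _ => by
    by_cases hE : E a
    · simp [hE, not_imp_comm.1 (h a) (not_not.2 hE)]
    · simp [hE]

theorem probOf_le_of_card_filter_le {K : Type} [DecidableEq K] {κ : α → K} (hμ : IsPMF μ)
    (hinv : ∀ a a', κ a = κ a' → μ a = μ a') (E : α → Prop) [DecidablePred E] {b : ℝ}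
    (hb : ∀ w, μ w ≠ 0 → (#{a | κ a = κ w ∧ E a} : ℝ) ≤ b * #{a | κ a = κ w}) :
    probOf μ E ≤ b := by
  set F : α → ℝ := fun w => #{a | κ a = κ w}
  have hF : ∀ w, 0 < F w := fun w => by
    simp only [F, Nat.cast_pos, card_pos]; exact ⟨w, by simp⟩
  have hterm : ∀ a, (if E a then μ a else 0) = ∑ w, if κ a = κ w ∧ E a then μ w / F w else 0 := by
    intro a
    by_cases ha : E a
    · have hcls : ∀ w ∈ ({w | κ a = κ w} : Finset α), μ w / F w = μ a / F a := fun w hw => by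
        have hw : κ a = κ w := (mem_filter.1 hw).2
        simp only [F, hinv w a hw.symm, hw]
      simp only [ha, and_true, if_true, ← sum_filter]
      have hcard : (#{w | κ a = κ w} : ℝ) = F a := by simp only [F, eq_comm]
      rw [sum_congr rfl hcls, sum_const, nsmul_eq_mul, hcard, mul_div_cancel₀ _ (hF a).ne']
    · simp [ha]
  calc probOf μ E = ∑ a, ∑ w, (if κ a = κ w ∧ E a then μ w / F w else 0) := by
        simp only [probOf, ← hterm]
        congr! 2
    _ = ∑ w, (#{a | κ a = κ w ∧ E a} : ℝ) * (μ w / F w) := by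
        rw [sum_comm]
        simp only [← sum_filter, sum_const, nsmul_eq_mul]
    _ ≤ ∑ w, b * μ w := by
        refine sum_le_sum fun w _ => ?_
        rcases eq_or_ne (μ w) 0 with hw | hw
        · simp [hw]
        rw [mul_div_assoc', div_le_iff₀ (hF w)]
        calc _ ≤ b * F w * μ w := mul_le_mul_of_nonneg_right (hb w hw) (hμ.1 w)
          _ = b * μ w * F w := by ring
    _ = b := by rw [← mul_sum, hμ.2, mul_one]

end Probability

theorem two_rpow_logb_mul (x y : ℝ) (hx : 0 < x) : (2 : ℝ) ^ (Real.logb 2 x * y) = x ^ y := by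
  rw [Real.rpow_mul zero_le_two, Real.rpow_logb zero_lt_two (by norm_num) hx]

theorem mul_pow_floor_le_two_rpow {ε k : ℝ} (hε : 0 < ε) (hk : 1 ≤ k) {n : ℕ} (hn : 2 ≤ n) :
    2 * k * (n + 1) * (k / (k + ε)) ^ ⌊ε * n / k⌋₊
      ≤ (2 : ℝ) ^ (-(ε / k * Real.logb 2 (1 + ε / k) * n)
          + (2 + Real.logb 2 (2 * k * (1 + ε / k))) * Real.logb 2 n) := by
  set u := 1 + ε / k
  set t := ε * n / k
  have hk₀ : 0 < k := by linarith
  have hu : 1 < u := by simp only [u]; linarith [div_pos hε hk₀]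
  have hn' : (2 : ℝ) ≤ n := by exact_mod_cast hn
  have hdecay : (k / (k + ε)) ^ ⌊t⌋₊ ≤ u * u ^ (-t) := by
    have hku : k / (k + ε) = u⁻¹ := by simp only [u]; field_simp
    rw [hku, inv_pow, ← Real.rpow_natCast, ← Real.rpow_neg (by linarith)]
    calc u ^ (-(⌊t⌋₊ : ℝ)) ≤ u ^ (1 + -t) :=
          Real.rpow_le_rpow_of_exponent_le hu.le (by linarith [Nat.lt_floor_add_one t])
      _ = u * u ^ (-t) := by rw [Real.rpow_add (by linarith), Real.rpow_one]
  have hpoly : 2 * k * u * (n + 1) ≤ (n : ℝ) ^ (2 + Real.logb 2 (2 * k * u)) := by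
    have hc : 0 ≤ Real.logb 2 (2 * k * u) := Real.logb_nonneg one_lt_two (by nlinarith)
    rw [Real.rpow_add (by linarith), Real.rpow_two, mul_comm]
    gcongr
    · nlinarith
    · calc 2 * k * u = (2 : ℝ) ^ Real.logb 2 (2 * k * u) :=
            (Real.rpow_logb zero_lt_two (by norm_num) (by positivity)).symm
        _ ≤ (n : ℝ) ^ Real.logb 2 (2 * k * u) := Real.rpow_le_rpow zero_le_two hn' hc
  rw [Real.rpow_add zero_lt_two, mul_comm (2 + _), two_rpow_logb_mul _ _ (by linarith),
    show -(ε / k * Real.logb 2 u * n) = Real.logb 2 u * -t by simp only [t]; ring,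
    two_rpow_logb_mul _ _ (by linarith)]
  calc 2 * k * (n + 1) * (k / (k + ε)) ^ ⌊t⌋₊ ≤ 2 * k * (n + 1) * (u * u ^ (-t)) := by gcongr
    _ = 2 * k * u * (n + 1) * u ^ (-t) := by ring
    _ ≤ (n : ℝ) ^ (2 + Real.logb 2 (2 * k * u)) * u ^ (-t) := by gcongr
    _ = u ^ (-t) * (n : ℝ) ^ (2 + Real.logb 2 (2 * k * u)) := mul_comm _ _

open Classical in
/-- `#A * #{t ∈ B | P (w t)} / #B`, with `A = {t | (xs t, ys t) = (a, b)} ⊆ B = {t | ys t = b}`,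
is the (hypergeometric) mean of `#{t ∈ A | P (zs t)}` over the joint-type class of `w`. -/
def CountExceedsMean {𝒳 𝒴 𝒵 : Type} {n : ℕ} (xs : Fin n → 𝒳) (ys : Fin n → 𝒴)
    (w zs : Fin n → 𝒵) (a : 𝒳) (b : 𝒴) (P : 𝒵 → Prop) (δ : ℝ) : Prop :=
  (#{t | (xs t, ys t) = (a, b)} : ℝ) * #{t ∈ {t | ys t = b} | P (w t)} / #{t | ys t = b} + 2 * δ
    < #{t ∈ {t | (xs t, ys t) = (a, b)} | P (zs t)}

section TypeClass

variable {𝒳 𝒴 𝒵 : Type} [Fintype 𝒴] [Fintype 𝒵] {n : ℕ}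

open Classical in
theorem card_typeClass_countExceedsMean_le (xs : Fin n → 𝒳) (ys : Fin n → 𝒴) (w : Fin n → 𝒵)
    (a : 𝒳) (b : 𝒴) (P : 𝒵 → Prop) {δ : ℝ} (hδ : 0 < δ) :
    (#{zs | jointType n (fun t => (ys t, zs t)) = jointType n (fun t => (ys t, w t)) ∧
        CountExceedsMean xs ys w zs a b P δ} : ℝ)
      ≤ (n + 1) * ((n : ℝ) / (n + δ)) ^ ⌊δ⌋₊ * #{zs : Fin n → 𝒵 |
          jointType n (fun t => (ys t, zs t)) = jointType n (fun t => (ys t, w t))} := by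
  set cls : Finset (Fin n → 𝒵) :=
    {zs | jointType n (fun t => (ys t, zs t)) = jointType n fun t => (ys t, w t)}
  set B : Finset (Fin n) := {t | ys t = b}
  have hAB : ({t | (xs t, ys t) = (a, b)} : Finset (Fin n)) ⊆ B := fun t ht => by
    simp only [B, mem_filter, Prod.mk.injEq] at ht ⊢; exact ⟨ht.1, ht.2.2⟩
  have hswap : ∀ zs ∈ cls, ∀ i ∈ B, ∀ j ∈ B, zs ∘ Equiv.swap i j ∈ cls := by
    intro zs hzs i hi j hj
    simp only [cls, B, mem_filter, mem_univ, true_and] at hzs hi hj ⊢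
    rw [jointType_comp_swap (hi.trans hj.symm), hzs]
  have hm : ∀ zs ∈ cls, #{t ∈ B | P (zs t)} = #{t ∈ B | P (w t)} := by
    intro zs hzs
    simp only [B, filter_filter]
    exact card_filter_eq_of_jointType_eq (mem_filter.1 hzs).2 fun x => x.1 = b ∧ P x.2
  have htail := card_upper_tail_le (P := P) hAB hswap hm hδ
  rw [Fintype.card_fin, filter_filter] at htail
  convert htail using 3
  ext zs
  simp [CountExceedsMean, B]

open Classical in
theorem exists_countExceedsMean_of_not_typical [Fintype 𝒳] {p : 𝒳 × 𝒴 × 𝒵 → ℝ} (hp : IsPMF p)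
    (hmk : ∀ x y z, p (x, y, z) * pmfMap p (fun a => a.2.1) y =
      pmfMap p (fun a => (a.1, a.2.1)) (x, y) * pmfMap p (fun a => (a.2.1, a.2.2)) (y, z))
    {ε k : ℝ} (hε : 0 < ε) (hk : (Fintype.card (𝒳 × 𝒴 × 𝒵) : ℝ) ≤ k) (hk₀ : 0 < k) (hn : n ≠ 0)
    {xs : Fin n → 𝒳} {ys : Fin n → 𝒴} {w zs : Fin n → 𝒵}
    (hxy : tv (jointType n fun t => (xs t, ys t)) (pmfMap p fun a => (a.1, a.2.1)) < ε)
    (hyz : tv (jointType n fun t => (ys t, w t)) (pmfMap p fun a => (a.2.1, a.2.2)) < ε)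
    (hbad : ¬ tv (jointType n fun t => (xs t, ys t, zs t)) p < 4 * ε) :
    ∃ x : 𝒳 × 𝒴 × 𝒵, CountExceedsMean xs ys w zs x.1 x.2.1 (· = x.2.2) (ε * n / k) ∨
      CountExceedsMean xs ys w zs x.1 x.2.1 (¬ · = x.2.2) (ε * n / k) := by
  have hnR : (0 : ℝ) < n := by exact_mod_cast Nat.pos_of_ne_zero hn
  have hT := tv_markovJoin_jointType_lt hp hmk hxy hyz
  have hRT := tv_triangle (jointType n fun t => (xs t, ys t, zs t))
    (markovJoin (jointType n fun t => (xs t, ys t)) (jointType n fun t => (ys t, w t))) p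
  obtain ⟨⟨a, b, c⟩, hcell⟩ := exists_lt_abs_sub_of_lt_tv hε.le hk hk₀ (by linarith)
  rw [jointType_triple_apply, markovJoin_jointType_apply,
    show 2 * ε / k = 2 * (ε * n / k) / n by field_simp] at hcell
  refine ⟨(a, b, c), ?_⟩
  rcases lt_or_lt_sub_of_lt_abs_sub_div hnR (Nat.cast_nonneg _) (by positivity) hcell with h | h
  · exact Or.inl h
  · -- a deficit of `zs t = c` in the cell is an excess of `zs t ≠ c`
    right
    unfold CountExceedsMean
    convert h using 4 <;> rw [← cast_card_filter_not] <;> congr 2 <;> ext <;> simp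

open Classical in
theorem card_typeClass_not_typical_le [Fintype 𝒳] {p : 𝒳 × 𝒴 × 𝒵 → ℝ} (hp : IsPMF p)
    (hmk : ∀ x y z, p (x, y, z) * pmfMap p (fun a => a.2.1) y =
      pmfMap p (fun a => (a.1, a.2.1)) (x, y) * pmfMap p (fun a => (a.2.1, a.2.2)) (y, z))
    {ε k : ℝ} (hε : 0 < ε) (hk : (Fintype.card (𝒳 × 𝒴 × 𝒵) : ℝ) ≤ k) (hk₀ : 0 < k) (hn : n ≠ 0)
    (xs : Fin n → 𝒳) (ys : Fin n → 𝒴) (w : Fin n → 𝒵)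
    (hxy : tv (jointType n fun t => (xs t, ys t)) (pmfMap p fun a => (a.1, a.2.1)) < ε)
    (hyz : tv (jointType n fun t => (ys t, w t)) (pmfMap p fun a => (a.2.1, a.2.2)) < ε) :
    (#{zs : Fin n → 𝒵 | jointType n (fun t => (ys t, zs t)) = jointType n (fun t => (ys t, w t)) ∧
        ¬ tv (jointType n fun t => (xs t, ys t, zs t)) p < 4 * ε} : ℝ)
      ≤ 2 * k * (n + 1) * (k / (k + ε)) ^ ⌊ε * n / k⌋₊ * #{zs : Fin n → 𝒵 |
          jointType n (fun t => (ys t, zs t)) = jointType n (fun t => (ys t, w t))} := by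
  set cls : Finset (Fin n → 𝒵) :=
    {zs | jointType n (fun t => (ys t, zs t)) = jointType n (fun t => (ys t, w t))}
  set δ := ε * n / k
  have hnR : (0 : ℝ) < n := by exact_mod_cast Nat.pos_of_ne_zero hn
  have hratio : (n : ℝ) / (n + δ) = k / (k + ε) := by simp only [δ]; field_simp
  let excess (x : 𝒳 × 𝒴 × 𝒵) (P : 𝒵 → Prop) : Finset (Fin n → 𝒵) :=
    {zs | jointType n (fun t => (ys t, zs t)) = jointType n (fun t => (ys t, w t)) ∧
      CountExceedsMean xs ys w zs x.1 x.2.1 P δ}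
  have hexcess (x : 𝒳 × 𝒴 × 𝒵) (P : 𝒵 → Prop) :
      (#(excess x P) : ℝ) ≤ (n + 1) * (k / (k + ε)) ^ ⌊δ⌋₊ * #cls :=
    hratio ▸ card_typeClass_countExceedsMean_le xs ys w x.1 x.2.1 P (by positivity)
  have hsub : ({zs | jointType n (fun t => (ys t, zs t)) = jointType n (fun t => (ys t, w t)) ∧
        ¬ tv (jointType n fun t => (xs t, ys t, zs t)) p < 4 * ε} : Finset (Fin n → 𝒵))
      ⊆ univ.biUnion fun x => excess x (· = x.2.2) ∪ excess x (¬ · = x.2.2) := by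
    intro zs hzs
    obtain ⟨hcls, hbad⟩ := (mem_filter.1 hzs).2
    obtain ⟨x, hx⟩ := exists_countExceedsMean_of_not_typical hp hmk hε hk hk₀ hn hxy hyz hbad
    simp only [mem_biUnion, mem_univ, true_and, mem_union]
    exact ⟨x, hx.imp (fun h => mem_filter.2 ⟨mem_univ _, hcls, h⟩)
      (fun h => mem_filter.2 ⟨mem_univ _, hcls, h⟩)⟩
  calc _ ≤ ∑ x, (#(excess x (· = x.2.2)) + #(excess x (¬ · = x.2.2)) : ℝ) := by
        exact_mod_cast (card_le_card hsub).trans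
          (card_biUnion_le.trans (sum_le_sum fun x _ => card_union_le _ _))
    _ ≤ ∑ _x : 𝒳 × 𝒴 × 𝒵, 2 * ((n + 1) * (k / (k + ε)) ^ ⌊δ⌋₊ * #cls) :=
        sum_le_sum fun x _ => by linarith [hexcess x (· = x.2.2), hexcess x (¬ · = x.2.2)]
    _ ≤ k * (2 * ((n + 1) * (k / (k + ε)) ^ ⌊δ⌋₊ * #cls)) := by
        rw [sum_const, card_univ, nsmul_eq_mul]
        gcongr
    _ = _ := by ring

end TypeClass

/-- Strong Markov Lemma: fix finite alphabets and `ε > 0`.  There are constants `α > 0`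
and `β` (depending only on `ε` and the alphabet sizes) such that for every pmf `p` on
`𝒳 × 𝒴 × 𝒵` forming a Markov chain `X − Y − Z`, every pair of `ε`-jointly typical
sequences `(x^n, y^n)`, and every random sequence `Z^n ∼ μ` supported on the `z^n` that
are `ε`-jointly typical with `y^n` and whose distribution is permutation-invariant with
respect to `y^n`, the triple `(x^n, y^n, Z^n)` is `4ε`-jointly typical with probability
at least `1 − 2^{−αn + β log n}`. -/
theorem strong_markov_lemma {𝒳 𝒴 𝒵 : Type} [Fintype 𝒳] [Fintype 𝒴] [Fintype 𝒵]
    (ε : ℝ) (hε : 0 < ε) :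
    ∃ α : ℝ, 0 < α ∧ ∃ β : ℝ,
      ∀ (p : 𝒳 × 𝒴 × 𝒵 → ℝ), IsPMF p →
      (∀ x y z, p (x, y, z) * pmfMap p (fun a => a.2.1) y =
          pmfMap p (fun a => (a.1, a.2.1)) (x, y) *
            pmfMap p (fun a => (a.2.1, a.2.2)) (y, z)) →
      ∀ (n : ℕ) (xs : Fin n → 𝒳) (ys : Fin n → 𝒴) (μ : (Fin n → 𝒵) → ℝ),
        IsPMF μ →
        tv (jointType n fun t => (xs t, ys t)) (pmfMap p fun a => (a.1, a.2.1)) < ε →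
        (∀ zs, μ zs ≠ 0 →
          tv (jointType n fun t => (ys t, zs t)) (pmfMap p fun a => (a.2.1, a.2.2)) < ε) →
        (∀ zs zs', jointType n (fun t => (ys t, zs t)) = jointType n (fun t => (ys t, zs' t))
          → μ zs = μ zs') →
        1 - (2 : ℝ) ^ (-(α * n) + β * Real.logb 2 n) ≤
          probOf μ (fun zs => tv (jointType n fun t => (xs t, ys t, zs t)) p < 4 * ε) := by
  -- `+ 1` keeps `k ≥ 1` before the alphabet is known to be nonempty
  set k : ℝ := Fintype.card (𝒳 × 𝒴 × 𝒵) + 1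
  have hk : 1 ≤ k := le_add_of_nonneg_left (Nat.cast_nonneg _)
  have hu : 1 < 1 + ε / k := lt_add_of_pos_right 1 (div_pos hε (by linarith))
  refine ⟨ε / k * Real.logb 2 (1 + ε / k), mul_pos (div_pos hε (by linarith))
    (Real.logb_pos one_lt_two hu), 2 + Real.logb 2 (2 * k * (1 + ε / k)), ?_⟩
  intro p hp hmk n xs ys μ hμ hxy hyz hinv
  obtain rfl | rfl | hn := show n = 0 ∨ n = 1 ∨ 2 ≤ n by omega
  · simpa using probOf_nonneg hμ _
  · -- `log n = 0`, so exact typicality is needed: one position makes the triple type a join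
    have hgood : ∀ zs, μ zs ≠ 0 → tv (jointType 1 fun t => (xs t, ys t, zs t)) p < 4 * ε := by
      intro zs hzs
      rw [← markovJoin_jointType_one]
      linarith [tv_markovJoin_jointType_lt hp hmk hxy (hyz zs hzs)]
    rw [sub_le_comm, ← probOf_not hμ, probOf_eq_zero fun zs hzs => not_not.2 (hgood zs hzs)]
    positivity
  rw [sub_le_comm, ← probOf_not hμ]
  refine (probOf_le_of_card_filter_le (κ := fun zs => jointType n fun t => (ys t, zs t)) hμ hinv _
    fun w hw => ?_).trans (mul_pow_floor_le_two_rpow hε hk hn)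
  convert card_typeClass_not_typical_le hp hmk hε (le_add_of_nonneg_right zero_le_one)
    (by linarith) (by omega) xs ys w hxy (hyz w hw) using 4
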